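/- Let A_1, …, A_k ∈ M_n be nonzero positive semidefinite matrices that are pairwise orthogonal with respect to the trace inner product (tr(A_i* A_j) = 0 for i ≠ j) and whose linear span contains the identity matrix I, and let B_1, …, B_k ∈ M_n be positive semidefinite matrices with tr(A_i) = tr(B_i) for every i. Then there exists a completely positive, entanglement breaking, trace-preserving linear map φ : M_n → M_n (an EBT map) such that φ(A_i) = B_i for every i ∈ {1, …, k}. -/

import Mathlib

open Matrix
open scoped ComplexOrder Kronecker

/-- The map `I_k ⊗ φ` acting on `k×k` block matrices with `n×n` blocks:
the `((i,r),(j,s))` entry of the output is the `(r,s)` entry of `φ` applied to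
the `(i,j)`-th block of `M`. -/
def blockMap {n : ℕ} (k : ℕ)
    (φ : Matrix (Fin n) (Fin n) ℂ → Matrix (Fin n) (Fin n) ℂ)
    (M : Matrix (Fin k × Fin n) (Fin k × Fin n) ℂ) :
    Matrix (Fin k × Fin n) (Fin k × Fin n) ℂ :=
  Matrix.of fun p q => φ (Matrix.of fun r s => M (p.1, r) (q.1, s)) p.2 q.2

/-- `φ : M_n → M_n` is completely positive if for every `k` the induced map on
`k×k` block matrices sends positive semidefinite matrices to positive
semidefinite matrices. -/
def IsCompletelyPositive {n : ℕ}
    (φ : Matrix (Fin n) (Fin n) ℂ → Matrix (Fin n) (Fin n) ℂ) : Prop :=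
  ∀ (k : ℕ) (M : Matrix (Fin k × Fin n) (Fin k × Fin n) ℂ),
    M.PosSemidef → (blockMap k φ M).PosSemidef

/-- `φ : M_n → M_n` is entanglement breaking if it admits a Kraus
representation `φ(X) = Σ_j V_j X V_j*` with every `V_j` of rank at most one. -/
def IsEntanglementBreaking {n : ℕ}
    (φ : Matrix (Fin n) (Fin n) ℂ → Matrix (Fin n) (Fin n) ℂ) : Prop :=
  ∃ (m : ℕ) (V : Fin m → Matrix (Fin n) (Fin n) ℂ),
    (∀ j, (V j).rank ≤ 1) ∧ ∀ X, φ X = ∑ j, V j * X * (V j)ᴴ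

/-- The Choi matrix of `φ : M_n → M_n`: the `n²×n²` block matrix whose
`(i,j)`-th `n×n` block is `φ (E i j)`. -/
def choiMatrix {n : ℕ}
    (φ : Matrix (Fin n) (Fin n) ℂ → Matrix (Fin n) (Fin n) ℂ) :
    Matrix (Fin n × Fin n) (Fin n × Fin n) ℂ :=
  Matrix.of fun p q => φ (Matrix.single p.1 q.1 1) p.2 q.2


/-! The interpolating map is the measure-and-prepare map
`φ X = ∑ i, (tr ((A i)ᴴ * X) / tr ((A i)ᴴ * A i)) • B i`.
Writing the positive semidefinite matrices `P i = (A i)ᴴ / tr ((A i)ᴴ * A i)` and `B i` as sums of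
rank-one projectors `u uᴴ` and `w wᴴ`, each term `tr (P i * X) • B i` equals
`∑ (w uᴴ) X (w uᴴ)ᴴ`, a Kraus form with rank-one operators, so `φ` is entanglement breaking
and hence completely positive. Orthogonality gives `φ (A j) = B j`, and expanding the identity
in the orthogonal family, `1 = ∑ i, (tr (A i) / tr ((A i)ᴴ * A i)) • A i`, gives
`tr (φ X) = tr ((∑ i, tr (B i) • P i) * X) = tr X`. -/

section RankOne

variable {l m R : Type*} [Fintype m] [CommRing R]

lemma trace_vecMulVec_mul (u v : m → R) (X : Matrix m m R) :
    (vecMulVec u v * X).trace = (v ᵥ* X) ⬝ᵥ u := by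
  rw [vecMulVec_mul, trace_vecMulVec, dotProduct_comm]

lemma vecMulVec_mul_mul_conjTranspose [StarRing R] (w : l → R) (u : m → R) (X : Matrix m m R) :
    vecMulVec w (star u) * X * (vecMulVec w (star u))ᴴ =
      (vecMulVec u (star u) * X).trace • vecMulVec w (star w) := by
  rw [conjTranspose_vecMulVec, star_star, vecMulVec_mul, vecMulVec_mul_vecMulVec,
    trace_vecMulVec_mul, vecMulVec_smul]

end RankOne

section Kraus

variable {n : ℕ}

lemma blockMap_sum {ι : Type*} [Fintype ι] (k : ℕ)
    (φ : ι → Matrix (Fin n) (Fin n) ℂ → Matrix (Fin n) (Fin n) ℂ)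
    (M : Matrix (Fin k × Fin n) (Fin k × Fin n) ℂ) :
    blockMap k (fun X => ∑ j, φ j X) M = ∑ j, blockMap k (φ j) M := by
  ext p q
  simp [blockMap, Matrix.sum_apply]

lemma blockMap_mul_mul_conjTranspose (k : ℕ) (V : Matrix (Fin n) (Fin n) ℂ)
    (M : Matrix (Fin k × Fin n) (Fin k × Fin n) ℂ) :
    blockMap k (fun X => V * X * Vᴴ) M = (1 ⊗ₖ V) * M * (1 ⊗ₖ V)ᴴ := by
  ext ⟨i, r⟩ ⟨j, s⟩
  simp [blockMap, mul_apply, one_apply, Fintype.sum_prod_type, apply_ite (starRingEnd ℂ), mul_ite]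

lemma isCompletelyPositive_of_kraus {ι : Type*} [Fintype ι]
    {φ : Matrix (Fin n) (Fin n) ℂ → Matrix (Fin n) (Fin n) ℂ}
    (V : ι → Matrix (Fin n) (Fin n) ℂ) (hφ : ∀ X, φ X = ∑ j, V j * X * (V j)ᴴ) :
    IsCompletelyPositive φ := by
  intro k M hM
  rw [funext hφ, blockMap_sum]
  refine posSemidef_sum _ fun j _ => ?_
  rw [blockMap_mul_mul_conjTranspose]
  exact hM.mul_mul_conjTranspose_same _

lemma isEntanglementBreaking_of_kraus {ι : Type*} [Fintype ι]
    {φ : Matrix (Fin n) (Fin n) ℂ → Matrix (Fin n) (Fin n) ℂ}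
    (V : ι → Matrix (Fin n) (Fin n) ℂ) (hV : ∀ j, (V j).rank ≤ 1)
    (hφ : ∀ X, φ X = ∑ j, V j * X * (V j)ᴴ) :
    IsEntanglementBreaking φ :=
  ⟨Fintype.card ι, V ∘ (Fintype.equivFin ι).symm, fun _ => hV _, fun X => by
    rw [hφ]
    exact (Fintype.sum_equiv (Fintype.equivFin ι).symm _ _ fun _ => rfl).symm⟩

lemma IsEntanglementBreaking.isCompletelyPositive
    {φ : Matrix (Fin n) (Fin n) ℂ → Matrix (Fin n) (Fin n) ℂ}
    (hφ : IsEntanglementBreaking φ) : IsCompletelyPositive φ :=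
  let ⟨_, V, _, hV⟩ := hφ
  isCompletelyPositive_of_kraus V hV

lemma isEntanglementBreaking_sum {ι : Type*} [Fintype ι]
    {φ : ι → Matrix (Fin n) (Fin n) ℂ → Matrix (Fin n) (Fin n) ℂ}
    (hφ : ∀ i, IsEntanglementBreaking (φ i)) :
    IsEntanglementBreaking fun X => ∑ i, φ i X := by
  choose m V hrank hV using hφ
  exact isEntanglementBreaking_of_kraus (fun j : Σ i, Fin (m i) => V j.1 j.2)
    (fun j => hrank _ _) fun X => by simp only [hV, Fintype.sum_sigma]

lemma isEntanglementBreaking_trace_mul_smul {P Q : Matrix (Fin n) (Fin n) ℂ}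
    (hP : P.PosSemidef) (hQ : Q.PosSemidef) :
    IsEntanglementBreaking fun X => (P * X).trace • Q := by
  obtain ⟨a, u, rfl⟩ := posSemidef_iff_eq_sum_vecMulVec.mp hP
  obtain ⟨b, w, rfl⟩ := posSemidef_iff_eq_sum_vecMulVec.mp hQ
  refine isEntanglementBreaking_of_kraus
    (fun j : Fin a × Fin b => vecMulVec (w j.2) (star (u j.1)))
    (fun _ => rank_vecMulVec_le _ _) fun X => ?_
  simp only [vecMulVec_mul_mul_conjTranspose, Fintype.sum_prod_type, Finset.sum_mul, trace_sum,
    Finset.sum_smul, Finset.smul_sum]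
  exact Finset.sum_comm

end Kraus

section MeasurePrepare

variable {m ι R : Type*} [Fintype m] [Fintype ι] [CommRing R]

def measurePrepare (P Q : ι → Matrix m m R) : Matrix m m R →ₗ[R] Matrix m m R :=
  ∑ i, (traceLinearMap m R R ∘ₗ LinearMap.mulLeft R (P i)).smulRight (Q i)

@[simp]
lemma measurePrepare_apply (P Q : ι → Matrix m m R) (X : Matrix m m R) :
    measurePrepare P Q X = ∑ i, (P i * X).trace • Q i := by
  simp [measurePrepare]

lemma trace_measurePrepare (P Q : ι → Matrix m m R) (X : Matrix m m R) :
    (measurePrepare P Q X).trace = ((∑ i, (Q i).trace • P i) * X).trace := by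
  simp [trace_sum, Finset.sum_mul, mul_comm]

lemma measurePrepare_apply_of_trace_mul_eq {P Q : ι → Matrix m m R} {X : Matrix m m R} {j : ι}
    (hj : (P j * X).trace = 1) (hother : ∀ i, i ≠ j → (P i * X).trace = 0) :
    measurePrepare P Q X = Q j := by
  rw [measurePrepare_apply, Finset.sum_eq_single j (fun i _ hi => by rw [hother i hi, zero_smul])
    (by simp), hj, one_smul]

lemma isEntanglementBreaking_measurePrepare {n : ℕ} {P Q : ι → Matrix (Fin n) (Fin n) ℂ}
    (hP : ∀ i, (P i).PosSemidef) (hQ : ∀ i, (Q i).PosSemidef) :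
    IsEntanglementBreaking (measurePrepare P Q) := by
  rw [funext (measurePrepare_apply P Q)]
  exact isEntanglementBreaking_sum fun i => isEntanglementBreaking_trace_mul_smul (hP i) (hQ i)

end MeasurePrepare

lemma eq_sum_trace_conjTranspose_mul_div_smul_of_mem_span {m ι K : Type*} [Fintype m]
    [Fintype ι] [Field K] [StarRing K] {A : ι → Matrix m m K}
    (horth : ∀ i j, i ≠ j → ((A i)ᴴ * A j).trace = 0) (hA : ∀ i, ((A i)ᴴ * A i).trace ≠ 0)
    {X : Matrix m m K} (hX : X ∈ Submodule.span K (Set.range A)) :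
    X = ∑ i, (((A i)ᴴ * X).trace / ((A i)ᴴ * A i).trace) • A i := by
  obtain ⟨d, rfl⟩ := (Submodule.mem_span_range_iff_exists_fun K).mp hX
  refine Finset.sum_congr rfl fun i _ => ?_
  have hcoeff : ((A i)ᴴ * ∑ j, d j • A j).trace = d i * ((A i)ᴴ * A i).trace := by
    simp only [Matrix.mul_sum, Matrix.mul_smul, trace_sum, trace_smul, smul_eq_mul]
    exact Finset.sum_eq_single i (fun j _ hj => by rw [horth i j hj.symm, mul_zero]) (by simp)
  rw [hcoeff, mul_div_cancel_right₀ _ (hA i)]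

/-- Corollary: if the orthogonal inputs `A i` span a subspace containing the
identity and the traces match, there is an EBT map (completely positive,
entanglement breaking, trace-preserving) interpolating `A i ↦ B i`. -/
theorem interpolation_EBT_of_one_mem_span
    {n k : ℕ} (A B : Fin k → Matrix (Fin n) (Fin n) ℂ)
    (hApsd : ∀ i, (A i).PosSemidef) (hAne : ∀ i, A i ≠ 0)
    (horth : ∀ i j, i ≠ j → ((A i)ᴴ * A j).trace = 0)
    (hspan : (1 : Matrix (Fin n) (Fin n) ℂ) ∈ Submodule.span ℂ (Set.range A))
    (hBpsd : ∀ i, (B i).PosSemidef)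
    (htr : ∀ i, (A i).trace = (B i).trace) :
    ∃ φ : Matrix (Fin n) (Fin n) ℂ →ₗ[ℂ] Matrix (Fin n) (Fin n) ℂ,
      IsCompletelyPositive (⇑φ) ∧ IsEntanglementBreaking (⇑φ) ∧
      (∀ X : Matrix (Fin n) (Fin n) ℂ, (φ X).trace = X.trace) ∧
      ∀ i, φ (A i) = B i := by
  have hnorm_pos : ∀ i, 0 < ((A i)ᴴ * A i).trace := fun i =>
    (posSemidef_conjTranspose_mul_self _).trace_nonneg.lt_of_ne'
      (trace_conjTranspose_mul_self_eq_zero_iff.not.mpr (hAne i))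
  set P : Fin k → Matrix (Fin n) (Fin n) ℂ := fun i => ((A i)ᴴ * A i).trace⁻¹ • (A i)ᴴ
  have hPpsd : ∀ i, (P i).PosSemidef := fun i =>
    (hApsd i).conjTranspose.smul (inv_nonneg_of_nonneg (hnorm_pos i).le)
  have hPA : ∀ i j, (P i * A j).trace = ((A i)ᴴ * A j).trace / ((A i)ᴴ * A i).trace := by
    intro i j
    rw [smul_mul, trace_smul, smul_eq_mul, inv_mul_eq_div]
  have hunit : ∑ i, (B i).trace • P i = 1 := by
    conv_rhs => rw [eq_sum_trace_conjTranspose_mul_div_smul_of_mem_span horth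
      (fun i => (hnorm_pos i).ne') hspan]
    refine Finset.sum_congr rfl fun i _ => ?_
    rw [smul_smul, Matrix.mul_one, (hApsd i).isHermitian.eq, htr, div_eq_mul_inv]
  have hEB := isEntanglementBreaking_measurePrepare hPpsd hBpsd
  refine ⟨measurePrepare P B, hEB.isCompletelyPositive, hEB,
    fun X => by rw [trace_measurePrepare, hunit, one_mul], fun j => ?_⟩
  refine measurePrepare_apply_of_trace_mul_eq ?_ fun i hi => ?_
  · rw [hPA, div_self (hnorm_pos j).ne']
  · rw [hPA, horth i j hi, zero_div]
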